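/- Suppose (G,p) and (G,p′) are two generic complex realisations of a rigid graph G = (V,E). Then (G,p) is radically (respectively quadratically) solvable if and only if (G,p′) is radically (respectively quadratically) solvable. -/

import Mathlib

/-!
The coordinates of a generic realisation form a finite algebraically independent family over `ℚ`.
Two such families of the same size are exchanged by a field automorphism `σ` of `ℂ`: extend both
to transcendence bases, whose complements have equal cardinality because the bases do, and extend
the resulting bijection of bases to `ℂ`, which is the algebraic closure of the field they generate.
Applying `σ` coordinatewise preserves congruence and maps `ℚ(q)` and `ℚ(d_G(q))` to the
corresponding fields of `σ ∘ q`, and it carries a radical (quadratic) tower to one of the same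
kind, so solvability passes from `p` to `σ ∘ p`, which is congruent to `p'`.
-/

open scoped Classical

noncomputable section

/-- The subfield generated by a subfield `K` and an element `x`. -/
def Subfield.adjoinEl {F : Type*} [Field F] (K : Subfield F) (x : F) : Subfield F :=
  Subfield.closure (↑K ∪ {x})

/-- `M` is a radical extension of `K`: there is a tower
`K = K₁ ⊆ K₂ ⊆ … ⊆ K_t = M` with `K_{i+1} = K_i(x_i)` and `x_i ^ n_i ∈ K_i`. -/
def IsRadicalExtension {F : Type*} [Field F] (K M : Subfield F) : Prop :=
  ∃ t : ℕ, ∃ c : Fin (t + 1) → Subfield F,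
    c 0 = K ∧ c (Fin.last t) = M ∧
    ∀ i : Fin t, ∃ x : F, ∃ n : ℕ, 0 < n ∧ x ^ n ∈ c i.castSucc ∧
      c i.succ = (c i.castSucc).adjoinEl x

/-- `M` is a quadratic extension of `K`: a radical extension with all `n_i = 2`. -/
def IsQuadraticExtension {F : Type*} [Field F] (K M : Subfield F) : Prop :=
  ∃ t : ℕ, ∃ c : Fin (t + 1) → Subfield F,
    c 0 = K ∧ c (Fin.last t) = M ∧
    ∀ i : Fin t, ∃ x : F, x ^ 2 ∈ c i.castSucc ∧
      c i.succ = (c i.castSucc).adjoinEl x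

/-- `L : K` is radically solvable if `L` is contained in a radical extension of `K`. -/
def RadicallySolvable {F : Type*} [Field F] (K L : Subfield F) : Prop :=
  ∃ M : Subfield F, L ≤ M ∧ IsRadicalExtension K M

/-- `L : K` is quadratically solvable if `L` is contained in a quadratic extension of `K`. -/
def QuadraticallySolvable {F : Type*} [Field F] (K L : Subfield F) : Prop :=
  ∃ M : Subfield F, L ≤ M ∧ IsQuadraticExtension K M

/-- A finite graph: a finite set of vertices (natural numbers) and of edges. -/
structure NatGraph : Type where
  verts : Finset ℕ
  edges : Finset (Sym2 ℕ)

namespace NatGraph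

/-- A graph is well-formed if it has no loops and edges join vertices. -/
def WellFormed (G : NatGraph) : Prop :=
  (∀ e ∈ G.edges, ¬ e.IsDiag) ∧ (∀ e ∈ G.edges, ∀ v ∈ e, v ∈ G.verts)

def union (G H : NatGraph) : NatGraph := ⟨G.verts ∪ H.verts, G.edges ∪ H.edges⟩

def addEdge (G : NatGraph) (u v : ℕ) : NatGraph := ⟨G.verts, insert s(u, v) G.edges⟩

def deleteEdge (G : NatGraph) (e : Sym2 ℕ) : NatGraph := ⟨G.verts, G.edges.erase e⟩

end NatGraph

/-- `d_p(u,v) = a² + b²` where `(a,b) = p u - p v`. -/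
def sqDist {R : Type*} [CommRing R] (p : ℕ → R × R) (u v : ℕ) : R :=
  ((p u).1 - (p v).1) ^ 2 + ((p u).2 - (p v).2) ^ 2

/-- Two frameworks are equivalent if corresponding edges have equal squared lengths. -/
def FEquiv {R : Type*} [CommRing R] (G : NatGraph) (p q : ℕ → R × R) : Prop :=
  ∀ u v : ℕ, s(u, v) ∈ G.edges → sqDist p u v = sqDist q u v

/-- Two frameworks are congruent if all pairs of vertices have equal squared distances. -/
def FCong {R : Type*} [CommRing R] (G : NatGraph) (p q : ℕ → R × R) : Prop :=
  ∀ u ∈ G.verts, ∀ v ∈ G.verts, sqDist p u v = sqDist q u v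

/-- A framework is generic if the coordinates of its points are
algebraically independent over `ℚ`. -/
def FGeneric {R : Type*} [CommRing R] [Algebra ℚ R] (G : NatGraph) (p : ℕ → R × R) : Prop :=
  AlgebraicIndependent ℚ
    (fun vb : {x // x ∈ G.verts} × Bool => if vb.2 then (p vb.1.1).2 else (p vb.1.1).1)

/-- A complex framework is quasi-generic if it is congruent to a generic one. -/
def QuasiGeneric (G : NatGraph) (p : ℕ → ℂ × ℂ) : Prop :=
  ∃ p' : ℕ → ℂ × ℂ, FGeneric G p' ∧ FCong G p p'

/-- A real framework is rigid if all equivalent frameworks near it are congruent to it. -/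
def RigidFramework (G : NatGraph) (p : ℕ → ℝ × ℝ) : Prop :=
  ∃ ε : ℝ, 0 < ε ∧ ∀ q : ℕ → ℝ × ℝ, FEquiv G p q →
    (∀ v ∈ G.verts, ((p v).1 - (q v).1) ^ 2 + ((p v).2 - (q v).2) ^ 2 < ε) →
    FCong G p q

/-- A graph is rigid if every generic real realisation is rigid. -/
def NatGraph.Rigid (G : NatGraph) : Prop :=
  ∀ p : ℕ → ℝ × ℝ, FGeneric G p → RigidFramework G p

/-- A graph is minimally rigid if it is rigid but ceases to be so on deleting any edge. -/
def NatGraph.MinimallyRigid (G : NatGraph) : Prop :=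
  G.Rigid ∧ ∀ e ∈ G.edges, ¬ (G.deleteEdge e).Rigid

/-- A graph is globally rigid if for every generic complex realisation every
equivalent realisation is congruent to it. -/
def NatGraph.GloballyRigid (G : NatGraph) : Prop :=
  ∀ p : ℕ → ℂ × ℂ, FGeneric G p → ∀ q : ℕ → ℂ × ℂ, FEquiv G p q → FCong G p q

/-- `ℚ(p)`: the subfield of `ℂ` generated by the coordinates of the points of `p`. -/
def coordField (G : NatGraph) (p : ℕ → ℂ × ℂ) : Subfield ℂ :=
  Subfield.closure {z : ℂ | ∃ v ∈ G.verts, z = (p v).1 ∨ z = (p v).2}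

/-- `ℚ(d_G(p))`: the subfield of `ℂ` generated by the squared edge lengths of `(G,p)`. -/
def distField (G : NatGraph) (p : ℕ → ℂ × ℂ) : Subfield ℂ :=
  Subfield.closure {z : ℂ | ∃ u v : ℕ, s(u, v) ∈ G.edges ∧ z = sqDist p u v}

/-- A complex framework is radically solvable if some congruent framework `(G,q)`
has `ℚ(q) : ℚ(d_G(q))` radically solvable. -/
def RadSolvableFramework (G : NatGraph) (p : ℕ → ℂ × ℂ) : Prop :=
  ∃ q : ℕ → ℂ × ℂ, FCong G p q ∧ RadicallySolvable (distField G q) (coordField G q)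

def QuadSolvableFramework (G : NatGraph) (p : ℕ → ℂ × ℂ) : Prop :=
  ∃ q : ℕ → ℂ × ℂ, FCong G p q ∧ QuadraticallySolvable (distField G q) (coordField G q)

/-- A graph is radically solvable if every generic realisation is radically solvable. -/
def NatGraph.RadSolvable (G : NatGraph) : Prop :=
  ∀ p : ℕ → ℂ × ℂ, FGeneric G p → RadSolvableFramework G p

/-- A graph is quadratically solvable if every generic realisation is so. -/
def NatGraph.QuadSolvable (G : NatGraph) : Prop :=
  ∀ p : ℕ → ℂ × ℂ, FGeneric G p → QuadSolvableFramework G p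

/-- Standard position with respect to `(v₁, v₂)`: `p v₁ = (0,0)` and `p v₂ = (0,z)`. -/
def StdPos (p : ℕ → ℂ × ℂ) (v₁ v₂ : ℕ) : Prop :=
  p v₁ = (0, 0) ∧ (p v₂).1 = 0

section Automorphisms

universe u

variable {F : Type*} {K : Type u} [Field F] [Field K] [Algebra F K]

theorem AlgebraicIndependent.exists_isTranscendenceBasis_sumElim {ι : Type*} {x : ι → K}
    (hx : AlgebraicIndependent F x) :
    ∃ (α : Type u) (z : α → K), IsTranscendenceBasis F (Sum.elim x z) := by
  classical
  obtain ⟨s, hxs, hs⟩ := exists_isTranscendenceBasis_superset hx.to_subtype_range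
  let e : ι ⊕ ↥(s \ Set.range x) ≃ s :=
    (Equiv.sumCongr (Equiv.ofInjective x hx.injective) (Equiv.refl _)).trans
      (Equiv.Set.sumDiffSubset hxs)
  refine ⟨_, Subtype.val, (isTranscendenceBasis_equiv' e ?_).2 hs⟩
  ext (i | z) <;> simp [e]

theorem IsTranscendenceBasis.cardinalMk_eq_of_sumElim {ι : Type*} [Finite ι] {α β : Type u}
    {x y : ι → K} {z : α → K} {w : β → K} (hxz : IsTranscendenceBasis F (Sum.elim x z))
    (hyw : IsTranscendenceBasis F (Sum.elim y w)) : Cardinal.mk α = Cardinal.mk β := by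
  have h := hxz.lift_cardinalMk_eq hyw
  simp only [Cardinal.mk_sum, Cardinal.lift_add, Cardinal.lift_lift] at h
  exact Cardinal.lift_inj.1 (Cardinal.eq_of_add_eq_add_left h (by simp))

variable [IsAlgClosed K] {L : Type u} [Field L] [Algebra F L] [IsAlgClosed L]

theorem exists_ringEquiv_apply_eq_of_isTranscendenceBasis {ι κ : Type*} {v : ι → K} {w : κ → L}
    (e : ι ≃ κ) (hv : IsTranscendenceBasis F v) (hw : IsTranscendenceBasis F w) :
    ∃ σ : K ≃+* L, ∀ i, σ (v i) = w (e i) := by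
  have := IsAlgClosed.isAlgClosure_of_transcendence_basis v hv
  have := IsAlgClosed.isAlgClosure_of_transcendence_basis w hw
  let τ : Algebra.adjoin F (Set.range v) ≃+* Algebra.adjoin F (Set.range w) :=
    (hv.1.aevalEquiv.symm.trans
      ((MvPolynomial.renameEquiv F e).trans hw.1.aevalEquiv)).toRingEquiv
  refine ⟨IsAlgClosure.equivOfEquiv K L τ, fun i => ?_⟩
  have hvi : algebraMap _ K (hv.1.aevalEquiv (MvPolynomial.X i)) = v i := by
    rw [hv.1.algebraMap_aevalEquiv, MvPolynomial.aeval_X]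
  rw [← hvi, IsAlgClosure.equivOfEquiv_algebraMap]
  simp [τ, hw.1.algebraMap_aevalEquiv]

theorem IsAlgClosed.exists_ringEquiv_apply_eq_of_algebraicIndependent {ι : Type*} [Finite ι]
    {x y : ι → K} (hx : AlgebraicIndependent F x) (hy : AlgebraicIndependent F y) :
    ∃ σ : K ≃+* K, ∀ i, σ (x i) = y i := by
  obtain ⟨α, z, hxz⟩ := hx.exists_isTranscendenceBasis_sumElim
  obtain ⟨β, w, hyw⟩ := hy.exists_isTranscendenceBasis_sumElim
  obtain ⟨e⟩ := Cardinal.eq.1 (hxz.cardinalMk_eq_of_sumElim hyw)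
  obtain ⟨σ, hσ⟩ :=
    exists_ringEquiv_apply_eq_of_isTranscendenceBasis (Equiv.sumCongr (Equiv.refl ι) e) hxz hyw
  exact ⟨σ, fun i => hσ (Sum.inl i)⟩

end Automorphisms

section FieldTowers

variable {E E' : Type*} [Field E] [Field E'] (f : E →+* E')

theorem Subfield.map_adjoinEl (K : Subfield E) (x : E) :
    (K.adjoinEl x).map f = (K.map f).adjoinEl (f x) := by
  rw [Subfield.adjoinEl, RingHom.map_field_closure, Set.image_union, Set.image_singleton]
  rfl

theorem IsRadicalExtension.map {K M : Subfield E} (h : IsRadicalExtension K M) :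
    IsRadicalExtension (K.map f) (M.map f) := by
  obtain ⟨t, c, h0, hlast, hstep⟩ := h
  refine ⟨t, fun i => (c i).map f, congrArg _ h0, congrArg _ hlast, fun i => ?_⟩
  obtain ⟨x, n, hn, hxn, hc⟩ := hstep i
  exact ⟨f x, n, hn, Subfield.mem_map.2 ⟨_, hxn, map_pow f x n⟩,
    (congrArg _ hc).trans (Subfield.map_adjoinEl f _ x)⟩

theorem IsQuadraticExtension.map {K M : Subfield E} (h : IsQuadraticExtension K M) :
    IsQuadraticExtension (K.map f) (M.map f) := by
  obtain ⟨t, c, h0, hlast, hstep⟩ := h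
  refine ⟨t, fun i => (c i).map f, congrArg _ h0, congrArg _ hlast, fun i => ?_⟩
  obtain ⟨x, hx2, hc⟩ := hstep i
  exact ⟨f x, Subfield.mem_map.2 ⟨_, hx2, map_pow f x 2⟩,
    (congrArg _ hc).trans (Subfield.map_adjoinEl f _ x)⟩

theorem RadicallySolvable.map {K L : Subfield E} (h : RadicallySolvable K L) :
    RadicallySolvable (K.map f) (L.map f) := by
  obtain ⟨M, hLM, hM⟩ := h
  exact ⟨M.map f, (Subfield.gc_map_comap f).monotone_l hLM, hM.map f⟩

theorem QuadraticallySolvable.map {K L : Subfield E} (h : QuadraticallySolvable K L) :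
    QuadraticallySolvable (K.map f) (L.map f) := by
  obtain ⟨M, hLM, hM⟩ := h
  exact ⟨M.map f, (Subfield.gc_map_comap f).monotone_l hLM, hM.map f⟩

end FieldTowers

section Frameworks

variable {G : NatGraph}

theorem sqDist_comp_prodMap {R S : Type*} [CommRing R] [CommRing S] (f : R →+* S)
    (p : ℕ → R × R) (u v : ℕ) : sqDist (Prod.map f f ∘ p) u v = f (sqDist p u v) := by
  simp [sqDist]

theorem FCong.symm {R : Type*} [CommRing R] {p q : ℕ → R × R} (h : FCong G p q) :
    FCong G q p :=
  fun u hu v hv => (h u hu v hv).symm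

theorem FCong.trans {R : Type*} [CommRing R] {p q r : ℕ → R × R} (hpq : FCong G p q)
    (hqr : FCong G q r) : FCong G p r :=
  fun u hu v hv => (hpq u hu v hv).trans (hqr u hu v hv)

theorem FCong.map {R S : Type*} [CommRing R] [CommRing S] (f : R →+* S) {p q : ℕ → R × R}
    (h : FCong G p q) : FCong G (Prod.map f f ∘ p) (Prod.map f f ∘ q) := by
  intro u hu v hv
  rw [sqDist_comp_prodMap, sqDist_comp_prodMap, h u hu v hv]

theorem fCong_of_eqOn {R : Type*} [CommRing R] {p q : ℕ → R × R}
    (h : Set.EqOn p q G.verts) : FCong G p q := by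
  intro u hu v hv
  rw [sqDist, sqDist, h hu, h hv]

theorem coordField_comp_prodMap (σ : ℂ →+* ℂ) (p : ℕ → ℂ × ℂ) :
    coordField G (Prod.map σ σ ∘ p) = (coordField G p).map σ := by
  rw [coordField, coordField, RingHom.map_field_closure]
  congr 1
  ext z
  simp only [Function.comp_apply, Prod.map_fst, Prod.map_snd, Set.mem_ofPred_eq, Set.mem_image]
  constructor
  · rintro ⟨v, hv, rfl | rfl⟩
    exacts [⟨_, ⟨v, hv, Or.inl rfl⟩, rfl⟩, ⟨_, ⟨v, hv, Or.inr rfl⟩, rfl⟩]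
  · rintro ⟨_, ⟨v, hv, rfl | rfl⟩, rfl⟩
    exacts [⟨v, hv, Or.inl rfl⟩, ⟨v, hv, Or.inr rfl⟩]

theorem distField_comp_prodMap (σ : ℂ →+* ℂ) (p : ℕ → ℂ × ℂ) :
    distField G (Prod.map σ σ ∘ p) = (distField G p).map σ := by
  rw [distField, distField, RingHom.map_field_closure]
  congr 1
  ext z
  simp only [sqDist_comp_prodMap, Set.mem_ofPred_eq, Set.mem_image]
  constructor
  · rintro ⟨u, v, he, rfl⟩
    exact ⟨_, ⟨u, v, he, rfl⟩, rfl⟩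
  · rintro ⟨_, ⟨u, v, he, rfl⟩, rfl⟩
    exact ⟨u, v, he, rfl⟩

theorem RadSolvableFramework.of_fCong {p p' : ℕ → ℂ × ℂ} (h : RadSolvableFramework G p)
    (hpp' : FCong G p p') : RadSolvableFramework G p' := by
  obtain ⟨q, hpq, hq⟩ := h
  exact ⟨q, hpp'.symm.trans hpq, hq⟩

theorem QuadSolvableFramework.of_fCong {p p' : ℕ → ℂ × ℂ} (h : QuadSolvableFramework G p)
    (hpp' : FCong G p p') : QuadSolvableFramework G p' := by
  obtain ⟨q, hpq, hq⟩ := h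
  exact ⟨q, hpp'.symm.trans hpq, hq⟩

theorem RadSolvableFramework.map (σ : ℂ →+* ℂ) {p : ℕ → ℂ × ℂ} (h : RadSolvableFramework G p) :
    RadSolvableFramework G (Prod.map σ σ ∘ p) := by
  obtain ⟨q, hpq, hq⟩ := h
  refine ⟨Prod.map σ σ ∘ q, hpq.map σ, ?_⟩
  rw [coordField_comp_prodMap, distField_comp_prodMap]
  exact hq.map σ

theorem QuadSolvableFramework.map (σ : ℂ →+* ℂ) {p : ℕ → ℂ × ℂ}
    (h : QuadSolvableFramework G p) : QuadSolvableFramework G (Prod.map σ σ ∘ p) := by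
  obtain ⟨q, hpq, hq⟩ := h
  refine ⟨Prod.map σ σ ∘ q, hpq.map σ, ?_⟩
  rw [coordField_comp_prodMap, distField_comp_prodMap]
  exact hq.map σ

theorem FGeneric.exists_ringEquiv_fCong {p p' : ℕ → ℂ × ℂ} (hp : FGeneric G p)
    (hp' : FGeneric G p') : ∃ σ : ℂ ≃+* ℂ, FCong G (Prod.map σ σ ∘ p) p' := by
  obtain ⟨σ, hσ⟩ := IsAlgClosed.exists_ringEquiv_apply_eq_of_algebraicIndependent hp hp'
  refine ⟨σ, fCong_of_eqOn fun v hv => Prod.ext ?_ ?_⟩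
  · simpa using hσ (⟨v, hv⟩, false)
  · simpa using hσ (⟨v, hv⟩, true)

theorem RadSolvableFramework.of_fGeneric {p p' : ℕ → ℂ × ℂ} (hp : FGeneric G p)
    (hp' : FGeneric G p') (h : RadSolvableFramework G p) : RadSolvableFramework G p' := by
  obtain ⟨σ, hσ⟩ := hp.exists_ringEquiv_fCong hp'
  exact (h.map σ).of_fCong hσ

theorem QuadSolvableFramework.of_fGeneric {p p' : ℕ → ℂ × ℂ} (hp : FGeneric G p)
    (hp' : FGeneric G p') (h : QuadSolvableFramework G p) : QuadSolvableFramework G p' := by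
  obtain ⟨σ, hσ⟩ := hp.exists_ringEquiv_fCong hp'
  exact (h.map σ).of_fCong hσ

end Frameworks

theorem statement10_general (G : NatGraph)
    (p p' : ℕ → ℂ × ℂ) (hp : FGeneric G p) (hp' : FGeneric G p') :
    (RadSolvableFramework G p ↔ RadSolvableFramework G p') ∧
    (QuadSolvableFramework G p ↔ QuadSolvableFramework G p') :=
  ⟨⟨.of_fGeneric hp hp', .of_fGeneric hp' hp⟩, ⟨.of_fGeneric hp hp', .of_fGeneric hp' hp⟩⟩

/-- Lemma: radical (quadratic) solvability is a generic property: it does not depend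
on the choice of the generic realisation of a rigid graph. -/
theorem statement10 (G : NatGraph) (hwf : G.WellFormed) (hrigid : G.Rigid)
    (p p' : ℕ → ℂ × ℂ) (hp : FGeneric G p) (hp' : FGeneric G p') :
    (RadSolvableFramework G p ↔ RadSolvableFramework G p') ∧
    (QuadSolvableFramework G p ↔ QuadSolvableFramework G p') :=
  statement10_general G p p' hp hp'
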